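/- Let M ⊕ N ↪ L be a primitive extension of lattices with glue group G ≅ L/(M ⊕ N), and let f_M, f_N be isometries of M and N with characteristic polynomials χ_M and χ_N. If f_M ⊕ f_N extends to an isometry of L, then every prime dividing |G| divides the resultant res(χ_M, χ_N). -/

import Mathlib

open Polynomial

/-- The Sylvester matrix of two integer polynomials `f` and `g`. -/
noncomputable def sylvesterMatrix (f g : Polynomial ℤ) :
    Matrix (Fin (f.natDegree + g.natDegree)) (Fin (f.natDegree + g.natDegree)) ℤ :=
  Matrix.of fun i j =>
    if (i : ℕ) < g.natDegree then
      (if (i : ℕ) ≤ (j : ℕ) then f.coeff ((j : ℕ) - (i : ℕ)) else 0)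
    else
      (if (i : ℕ) - g.natDegree ≤ (j : ℕ) then g.coeff ((j : ℕ) - ((i : ℕ) - g.natDegree)) else 0)

/-- The resultant of two integer polynomials, as the determinant of their Sylvester matrix. -/
noncomputable def resultant (f g : Polynomial ℤ) : ℤ := (sylvesterMatrix f g).det

/-- The characteristic polynomial of the restriction of `f` to an invariant submodule. -/
noncomputable def restrictCharpoly {L : Type*} [AddCommGroup L] [Module ℤ L]
    [Module.Free ℤ L] [Module.Finite ℤ L]
    (f : L →ₗ[ℤ] L) (M : Submodule ℤ L) (h : ∀ x ∈ M, f x ∈ M) : Polynomial ℤ := by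
  letI : Module ℤ ↥M := M.module
  exact LinearMap.charpoly (f.restrict h)

/-!
Cayley–Hamilton: `χ_M(f)` kills `M` and `χ_N(f)` kills `N`. If `c • x = m + n` with `c ≠ 0`,
`m ∈ M`, `n ∈ N`, then `c • χ_M(f) x = χ_M(f) n ∈ N`, so `χ_M(f) x ∈ N` by primitivity of `N`;
likewise `χ_N(f) x ∈ M`. Since `χ_M` is monic, the resultant is `u χ_M + v χ_N` in `ℤ[X]`, hence
`res • x = u(f) (χ_M(f) x) + v(f) (χ_N(f) x) ∈ M ⊔ N`. So `res` annihilates the glue group, which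
is then finite unless `res = 0`, and Cauchy's theorem gives an element of order `p` for every
prime `p` dividing its order.
-/

/-- `sylvesterMatrix f g` is the transpose of Mathlib's `sylvester g f`, up to reindexing. -/
theorem resultant_eq_polynomial_resultant (f g : ℤ[X]) :
    _root_.resultant f g = g.resultant f := by
  rw [_root_.resultant, Polynomial.resultant, ← Matrix.det_transpose,
    ← Matrix.det_reindex_self (finCongr (add_comm g.natDegree f.natDegree))]
  congr 1
  ext i j
  obtain ⟨j, rfl⟩ := (finCongr (add_comm g.natDegree f.natDegree)).surjective j
  rw [Matrix.reindex_apply, Matrix.submatrix_apply, Equiv.symm_apply_apply]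
  induction j using Fin.addCases <;>
  · simp only [Matrix.transpose_apply, sylvesterMatrix, Matrix.of_apply, sylvester, finCongr_symm,
      Fin.addCases_left, Fin.addCases_right, Set.mem_Icc, finCongr_apply, Fin.val_cast,
      Fin.val_castAdd, Fin.val_natAdd]
    split_ifs <;> first
      | rfl | omega | (congr 1; omega)
      | exact (coeff_eq_zero_of_natDegree_lt (by omega)).symm
      | exact coeff_eq_zero_of_natDegree_lt (by omega)

theorem C_resultant_mem_span_pair {f : ℤ[X]} (hf : f.Monic) (g : ℤ[X]) :
    C (_root_.resultant f g) ∈ Ideal.span {f, g} := by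
  by_cases hf0 : f.natDegree = 0
  · rw [eq_one_of_monic_natDegree_zero hf hf0, Ideal.mem_span_pair]
    exact ⟨C (_root_.resultant 1 g), 0, by ring⟩
  · obtain ⟨p, q, -, -, hpq⟩ :=
      exists_mul_add_mul_eq_C_resultant g f le_rfl le_rfl (Or.inr hf0)
    rw [resultant_eq_polynomial_resultant, ← hpq, Ideal.mem_span_pair]
    exact ⟨q, p, by ring⟩

theorem Submodule.coe_aeval_restrict {R L : Type*} [CommRing R] [AddCommGroup L] [Module R L]
    {f : Module.End R L} {P : Submodule R L} (hf : ∀ x ∈ P, f x ∈ P) (q : R[X]) (x : P) :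
    (aeval (f.restrict hf) q x : L) = aeval f q x := by
  induction q using Polynomial.induction_on' with
  | add p q hp hq => simp only [map_add, LinearMap.add_apply, Submodule.coe_add, hp, hq]
  | monomial n r =>
    rw [aeval_monomial, aeval_monomial, Module.End.pow_restrict n hf]
    rfl

theorem aeval_charpoly_restrict_apply {R L : Type*} [CommRing R] [AddCommGroup L] [Module R L]
    {f : Module.End R L} {P : Submodule R L} [Module.Free R P] [Module.Finite R P]
    (hf : ∀ x ∈ P, f x ∈ P) : ∀ x ∈ P, aeval f (f.restrict hf).charpoly x = 0 := by
  intro x hx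
  rw [← Submodule.coe_aeval_restrict hf _ ⟨x, hx⟩, LinearMap.aeval_self_charpoly]
  rfl

section PrimitiveExtension

variable {R L : Type*} [CommRing R] [AddCommGroup L] [Module R L]

def Submodule.IsPrimitive (N : Submodule R L) : Prop :=
  ∀ (x : L) (c : R), c ≠ 0 → c • x ∈ N → x ∈ N

variable {f : Module.End R L} {M N : Submodule R L}

theorem aeval_apply_mem_of_smul_mem_sup (hfN : ∀ y ∈ N, f y ∈ N)
    (hN : N.IsPrimitive) {q : R[X]}
    (hq : ∀ x ∈ M, aeval f q x = 0) {x : L} {c : R} (hc : c ≠ 0) (hx : c • x ∈ M ⊔ N) :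
    aeval f q x ∈ N := by
  refine hN _ c hc ?_
  obtain ⟨m, hm, n, hn, hmn⟩ := Submodule.mem_sup.mp hx
  rw [← map_smul, ← hmn, map_add, hq m hm, zero_add]
  exact aeval_apply_smul_mem_of_le_comap hn q f hfN

theorem smul_mem_sup_of_C_mem_span_pair (hfM : ∀ x ∈ M, f x ∈ M) (hfN : ∀ y ∈ N, f y ∈ N)
    (hM : M.IsPrimitive) (hN : N.IsPrimitive) {p q : R[X]}
    (hp : ∀ x ∈ M, aeval f p x = 0) (hq : ∀ y ∈ N, aeval f q y = 0) {r : R}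
    (hr : C r ∈ Ideal.span {p, q}) {x : L} {c : R} (hc : c ≠ 0) (hx : c • x ∈ M ⊔ N) :
    r • x ∈ M ⊔ N := by
  obtain ⟨u, v, huv⟩ := Ideal.mem_span_pair.mp hr
  have hpx : aeval f p x ∈ N := aeval_apply_mem_of_smul_mem_sup hfN hN hp hc hx
  have hqx : aeval f q x ∈ M :=
    aeval_apply_mem_of_smul_mem_sup hfM hM hq hc (sup_comm M N ▸ hx)
  have hrx : r • x = aeval f u (aeval f p x) + aeval f v (aeval f q x) := by
    rw [← Module.algebraMap_end_apply R R, ← aeval_C f r, ← huv]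
    simp only [map_add, map_mul, LinearMap.add_apply, Module.End.mul_apply]
  rw [hrx]
  exact add_mem (Submodule.mem_sup_right (aeval_apply_smul_mem_of_le_comap hpx u f hfN))
    (Submodule.mem_sup_left (aeval_apply_smul_mem_of_le_comap hqx v f hfM))

end PrimitiveExtension

/- The `ℤ`-module structure is an implicit argument so that it is read off `hr` (e.g. the quotient
module structure on `L ⧸ P`) instead of being synthesized as `AddCommGroup.toIntModule`. -/
theorem Module.IsTorsionBy.natCast_dvd_of_dvd_card {G : Type*} [AddCommGroup G] {_ : Module ℤ G}
    [Module.Finite ℤ G] {r : ℤ} (hr : Module.IsTorsionBy ℤ G r) {p : ℕ} (hp : p.Prime)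
    (hpG : p ∣ Nat.card G) : (p : ℤ) ∣ r := by
  rcases eq_or_ne r 0 with rfl | hr0
  · exact dvd_zero _
  have : Finite G := Module.finite_of_fg_torsion G fun x =>
    ⟨⟨r, mem_nonZeroDivisors_of_ne_zero hr0⟩, @hr x⟩
  have : Fact p.Prime := ⟨hp⟩
  obtain ⟨g, rfl⟩ := exists_prime_addOrderOf_dvd_card' p hpG
  exact addOrderOf_dvd_iff_zsmul_eq_zero.mpr ((int_smul_eq_zsmul _ r g).symm.trans (@hr g))

theorem stmt3_general {L : Type*} [AddCommGroup L] [Module ℤ L]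
    [Module.Free ℤ L] [Module.Finite ℤ L]
    (f : L ≃ₗ[ℤ] L)
    (M N : Submodule ℤ L)
    (hMprim : ∀ (x : L) (c : ℤ), c ≠ 0 → c • x ∈ M → x ∈ M)
    (hNprim : ∀ (x : L) (c : ℤ), c ≠ 0 → c • x ∈ N → x ∈ N)
    (hindex : ∀ x : L, ∃ c : ℤ, c ≠ 0 ∧ c • x ∈ M ⊔ N)
    (hfM : ∀ x ∈ M, f.toLinearMap x ∈ M) (hfN : ∀ y ∈ N, f.toLinearMap y ∈ N) :
    ∀ p : ℕ, p.Prime → p ∣ Nat.card (L ⧸ (M ⊔ N)) →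
      (p : ℤ) ∣ _root_.resultant (restrictCharpoly f.toLinearMap M hfM)
        (restrictCharpoly f.toLinearMap N hfN) := by
  intro p hp hpG
  -- the hypotheses use the additive group's `ℤ`-action; rewrite them in terms of `Module ℤ L`
  simp only [← int_smul_eq_zsmul ‹Module ℤ L›] at hMprim hNprim hindex
  have hmonic : (restrictCharpoly f.toLinearMap M hfM).Monic := by
    -- the module structure that `restrictCharpoly` uses on `M`
    let _ : Module ℤ M := M.module
    exact LinearMap.charpoly_monic _
  have hres := C_resultant_mem_span_pair hmonic (restrictCharpoly f.toLinearMap N hfN)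
  refine ((Module.isTorsionBy_quotient_iff _ _).mpr fun x => ?_).natCast_dvd_of_dvd_card hp hpG
  obtain ⟨c, hc, hcx⟩ := hindex x
  exact smul_mem_sup_of_C_mem_span_pair hfM hfN hMprim hNprim
    (aeval_charpoly_restrict_apply hfM) (aeval_charpoly_restrict_apply hfN) hres hc hcx

/-- Let `M ⊕ N ↪ L` be a primitive extension of lattices with glue group
`G ≅ L/(M ⊕ N)`, and `f_M, f_N` isometries of `M` and `N` with characteristic polynomials
`χ_M`, `χ_N`.  If `f_M ⊕ f_N` extends to an isometry of `L`, then every prime dividing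
`|G|` divides `res(χ_M, χ_N)`. -/
theorem stmt3 {L : Type*} [AddCommGroup L] [Module ℤ L]
    [Module.Free ℤ L] [Module.Finite ℤ L]
    (Φ : L →ₗ[ℤ] L →ₗ[ℤ] ℤ)
    (hsymm : ∀ x y : L, Φ x y = Φ y x)
    (hnd : ∀ x : L, (∀ y : L, Φ x y = 0) → x = 0)
    (f : L ≃ₗ[ℤ] L) (hisom : ∀ x y : L, Φ (f x) (f y) = Φ x y)
    (M N : Submodule ℤ L)
    (hMprim : ∀ (x : L) (c : ℤ), c ≠ 0 → c • x ∈ M → x ∈ M)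
    (hNprim : ∀ (x : L) (c : ℤ), c ≠ 0 → c • x ∈ N → x ∈ N)
    (hNcompl : ∀ y : L, y ∈ N ↔ ∀ x ∈ M, Φ x y = 0)
    (hMcompl : ∀ x : L, x ∈ M ↔ ∀ y ∈ N, Φ x y = 0)
    (hindex : ∀ x : L, ∃ c : ℤ, c ≠ 0 ∧ c • x ∈ M ⊔ N)
    (hfM : ∀ x ∈ M, f.toLinearMap x ∈ M) (hfN : ∀ y ∈ N, f.toLinearMap y ∈ N) :
    ∀ p : ℕ, p.Prime → p ∣ Nat.card (L ⧸ (M ⊔ N)) →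
      (p : ℤ) ∣ _root_.resultant (restrictCharpoly f.toLinearMap M hfM)
        (restrictCharpoly f.toLinearMap N hfN) :=
  stmt3_general f M N hMprim hNprim hindex hfM hfN
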